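/- arXiv:1911.02625 — 5 statements merged into one kernel-verified Lean document; each statement's English description precedes it below -/
import Mathlib

section
/- Let a, b, r be real numbers with r > 0 and 4a ≠ b². Suppose that for every μ ∈ ℝ the quartic equation a(2a(1 − μb) + b²)r⁴ + (b² − 12a)r² + 2(1 + μb) = 0 holds. Then b = 0, a > 0, and a r² = 3 + 2√2 or a r² = 3 − 2√2. -/
/-- If `r > 0`, `4a ≠ b²`, and the quartic biharmonicity condition
`a(2a(1 − μb) + b²)r⁴ + (b² − 12a)r² + 2(1 + μb) = 0` holds for every `μ ∈ ℝ`,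
then `b = 0`, `a > 0`, and `a r² = 3 + 2√2` or `a r² = 3 − 2√2`. -/
theorem totally_biharmonic_quartic_all_mu (a b r : ℝ) (hr : 0 < r) (hab : 4 * a ≠ b ^ 2)
    (h : ∀ μ : ℝ,
      a * (2 * a * (1 - μ * b) + b ^ 2) * r ^ 4 + (b ^ 2 - 12 * a) * r ^ 2
        + 2 * (1 + μ * b) = 0) :
    b = 0 ∧ 0 < a ∧ (a * r ^ 2 = 3 + 2 * Real.sqrt 2 ∨ a * r ^ 2 = 3 - 2 * Real.sqrt 2) := by
  have h0 := h 0
  have h1 := h 1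
  have hr2 : (0:ℝ) < r ^ 2 := by positivity
  have hcoef : b * (1 - (a * r ^ 2) ^ 2) = 0 := by nlinarith [h0, h1]
  have hb : b = 0 := by
    by_contra hb
    have hsq : (a * r ^ 2) ^ 2 = 1 := by
      rcases mul_eq_zero.mp hcoef with h' | h'
      · exact absurd h' hb
      · linarith
    have hfac : (a * r ^ 2 - 1) * (a * r ^ 2 + 1) = 0 := by nlinarith [hsq]
    rcases mul_eq_zero.mp hfac with h' | h'
    · -- a r² = 1 forces b² r² = 4 = 4 a r², i.e. 4a = b²
      apply hab
      have h1' : a * r ^ 2 = 1 := by linarith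
      have hbr : 4 * a * r ^ 2 = b ^ 2 * r ^ 2 := by nlinarith [h0, h1', hsq]
      exact mul_right_cancel₀ (ne_of_gt hr2) hbr
    · have e : a * r ^ 4 = (a * r ^ 2) * r ^ 2 := by ring
      have h1' : a * r ^ 2 = -1 := by linarith
      rw [h1'] at e
      nlinarith [h0, hsq, e, sq_nonneg b]
  subst hb
  have hq : (a * r ^ 2) ^ 2 - 6 * (a * r ^ 2) + 1 = 0 := by nlinarith [h0]
  set x := a * r ^ 2 with hx
  have hxpos : 0 < x := by nlinarith [sq_nonneg x]
  have ha : 0 < a := by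
    by_contra hc
    push_neg at hc
    nlinarith [mul_nonpos_of_nonpos_of_nonneg hc hr2.le]
  refine ⟨rfl, ha, ?_⟩
  have h8 : (x - 3) ^ 2 = 8 := by nlinarith
  have hs : Real.sqrt 8 = 2 * Real.sqrt 2 := by
    rw [show (8:ℝ) = 4 * 2 by norm_num, Real.sqrt_mul (by norm_num), show Real.sqrt 4 = 2 by
      rw [show (4:ℝ) = 2 ^ 2 by norm_num, Real.sqrt_sq (by norm_num)]]
  have habs : |x - 3| = Real.sqrt 8 := by rw [← Real.sqrt_sq_eq_abs, h8]
  rcases (abs_eq (Real.sqrt_nonneg 8)).mp habs with h' | h'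
  · left; rw [← hs]; linarith
  · right; rw [← hs]; linarith
end

section
/- Let a, b, μ ∈ ℝ and r > 0. Set λ_a = 1 + a r², Q = √(r² + (b r²/2 − μ λ_a)²), λ = λ_a/Q, s_ω = r/Q, c_ω = (b r²/2 − μ λ_a)/Q, ϖ = λ − 2 a r s_ω − b c_ω, κ = ϖ s_ω and τ = −ϖ c_ω − b/2. Then κ² + τ² = b²/4 − (b² − 4a) s_ω² if and only if a(2a(1 − μb) + b²)r⁴ + (b² − 12a)r² + 2(1 + μb) = 0. -/
/-- With `λ_a = 1 + a r²`, `Q = √(r² + (b r²/2 − μ λ_a)²)`, `λ = λ_a/Q`,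
`s_ω = r/Q`, `c_ω = (b r²/2 − μ λ_a)/Q`, `ϖ = λ − 2 a r s_ω − b c_ω`, `κ = ϖ s_ω` and
`τ = −ϖ c_ω − b/2`, the condition `κ² + τ² = b²/4 − (b² − 4a) s_ω²` holds if and only if
`a(2a(1 − μb) + b²)r⁴ + (b² − 12a)r² + 2(1 + μb) = 0`. -/
theorem helix_biharmonic_iff_quartic (a b μ r la Q l sω cω ϖ κ τ : ℝ) (hr : 0 < r)
    (hla : la = 1 + a * r ^ 2)
    (hQ : Q = Real.sqrt (r ^ 2 + (b * r ^ 2 / 2 - μ * la) ^ 2))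
    (hl : l = la / Q)
    (hs : sω = r / Q)
    (hc : cω = (b * r ^ 2 / 2 - μ * la) / Q)
    (hϖ : ϖ = l - 2 * a * r * sω - b * cω)
    (hκ : κ = ϖ * sω)
    (hτ : τ = -ϖ * cω - b / 2) :
    κ ^ 2 + τ ^ 2 = b ^ 2 / 4 - (b ^ 2 - 4 * a) * sω ^ 2 ↔
      a * (2 * a * (1 - μ * b) + b ^ 2) * r ^ 4 + (b ^ 2 - 12 * a) * r ^ 2
        + 2 * (1 + μ * b) = 0 := by
  have hin : (0:ℝ) < r ^ 2 + (b * r ^ 2 / 2 - μ * la) ^ 2 := by positivity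
  have hQ2 : Q ^ 2 = r ^ 2 + (b * r ^ 2 / 2 - μ * la) ^ 2 := by
    rw [hQ]; exact Real.sq_sqrt hin.le
  have hQpos : 0 < Q := by rw [hQ]; positivity
  have hQne : Q ≠ 0 := ne_of_gt hQpos
  set c : ℝ := b * r ^ 2 / 2 - μ * la with hcdef
  set D : ℝ := r ^ 2 + c ^ 2 with hDdef
  have hDpos : 0 < D := hin
  have hDne : D ≠ 0 := ne_of_gt hDpos
  set P : ℝ := la - 2 * a * r ^ 2 - b * c with hPdef
  have hκ' : κ = P * r / D := by
    rw [hκ, hϖ, hl, hs, hc, ← hQ2]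
    field_simp
    ring
  have hτ' : τ = -(P * c) / D - b / 2 := by
    rw [hτ, hϖ, hl, hs, hc, ← hQ2]
    field_simp
    ring
  have hs2 : sω ^ 2 = r ^ 2 / D := by
    rw [hs, div_pow, hQ2]
  rw [hκ', hτ', hs2]
  have key : (P * r / D) ^ 2 + (-(P * c) / D - b / 2) ^ 2
      - (b ^ 2 / 4 - (b ^ 2 - 4 * a) * (r ^ 2 / D))
      = (P ^ 2 + P * b * c + (b ^ 2 - 4 * a) * r ^ 2) / D := by
    field_simp
    linear_combination (P ^ 2 * D) * hDdef.symm
  have hpoly : 2 * (P ^ 2 + P * b * c + (b ^ 2 - 4 * a) * r ^ 2)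
      = a * (2 * a * (1 - μ * b) + b ^ 2) * r ^ 4 + (b ^ 2 - 12 * a) * r ^ 2
        + 2 * (1 + μ * b) := by
    rw [hPdef, hcdef, hla]; ring
  rw [← sub_eq_zero, key, div_eq_zero_iff]
  constructor
  · rintro (h | h)
    · linarith [hpoly]
    · exact absurd h hDne
  · intro h
    left
    linarith [hpoly]
end

section
/- Let a, b, μ ∈ ℝ, r > 0 and λ > 0, and set λ_a = 1 + a r², assumed positive. Consider the curve γ(s) = (r sin(λ s), −r cos(λ s), λ μ s) in ℝ³, which lies in the region where 1 + a(x² + y²) = λ_a > 0. Then h_{γ(s)}(γ'(s), γ'(s)) = 1 for all s ∈ ℝ if and only if λ = λ_a / √(r² + (b r²/2 − μ λ_a)²). -/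
/-- `λ_a(p) = 1 + a(x² + y²)` for `p = (x,y,z)`. -/
noncomputable def bcvLambda (a : ℝ) (p : ℝ × ℝ × ℝ) : ℝ :=
  1 + a * (p.1 ^ 2 + p.2.1 ^ 2)

/-- The Bianchi–Cartan–Vranceanu metric `h_{a,b}` at the point `p`, applied to the
vectors `u` and `v`. -/
noncomputable def bcvMetric (a b : ℝ) (p u v : ℝ × ℝ × ℝ) : ℝ :=
  (u.1 * v.1 + u.2.1 * v.2.1) / (bcvLambda a p) ^ 2 +
    (u.2.2 + (b / 2) * (p.2.1 * u.1 - p.1 * u.2.1) / bcvLambda a p) *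
      (v.2.2 + (b / 2) * (p.2.1 * v.1 - p.1 * v.2.1) / bcvLambda a p)

/-!
The helix runs on the cylinder `x² + y² = r²`, where `λ_a` is the constant `1 + a r²`. Its
velocity `(r λ cos, r λ sin, λ μ)` has horizontal part of Euclidean length `r λ` and satisfies
`y u₁ - x u₂ = -r² λ`, so its squared `h`-length is the constant
`λ² (r² + (b r²/2 - μ λ_a)²) / λ_a²`; being `1` for positive `λ` is the stated formula.
-/

open Real

lemma bcvLambda_sin_cos (a r t z : ℝ) :
    bcvLambda a (r * sin t, -r * cos t, z) = 1 + a * r ^ 2 := by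
  simp only [bcvLambda]
  linear_combination a * r ^ 2 * sin_sq_add_cos_sq t

lemma hasDerivAt_helix (r l c s : ℝ) :
    HasDerivAt (fun u => (r * sin (l * u), -r * cos (l * u), c * u))
      (r * l * cos (l * s), r * l * sin (l * s), c) s := by
  have hls : HasDerivAt (fun s => l * s) l s := by
    simpa using (hasDerivAt_id s).const_mul l
  have hx := hls.sin.const_mul r
  have hy := hls.cos.const_mul (-r)
  have hz : HasDerivAt (fun s => c * s) c s := by
    simpa using (hasDerivAt_id s).const_mul c
  refine (hx.prodMk (hy.prodMk hz)).congr_deriv ?_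
  simp only [Prod.mk.injEq, and_true]
  exact ⟨by ring, by ring⟩

lemma bcvMetric_helix_velocity {a r : ℝ} (b l μ t z : ℝ) (hla : 1 + a * r ^ 2 ≠ 0) :
    let v : ℝ × ℝ × ℝ := (r * l * cos t, r * l * sin t, l * μ)
    bcvMetric a b (r * sin t, -r * cos t, z) v v
      = l ^ 2 * (r ^ 2 + (b * r ^ 2 / 2 - μ * (1 + a * r ^ 2)) ^ 2) / (1 + a * r ^ 2) ^ 2 := by
  intro v
  have horiz : r * l * cos t * (r * l * cos t) + r * l * sin t * (r * l * sin t) = r ^ 2 * l ^ 2 := by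
    linear_combination r ^ 2 * l ^ 2 * sin_sq_add_cos_sq t
  have twist : -r * cos t * (r * l * cos t) - r * sin t * (r * l * sin t) = -(r ^ 2 * l) := by
    linear_combination -r ^ 2 * l * sin_sq_add_cos_sq t
  simp only [bcvMetric, bcvLambda_sin_cos, v, horiz, twist]
  generalize 1 + a * r ^ 2 = c at hla ⊢
  field_simp
  ring

lemma sq_mul_div_sq_eq_one_iff {l c K : ℝ} (hl : 0 < l) (hc : 0 < c) (hK : 0 ≤ K) :
    l ^ 2 * K / c ^ 2 = 1 ↔ l = c / √K := by
  rcases hK.eq_or_lt with rfl | hK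
  · simp [hl.ne']
  · rw [div_eq_one_iff_eq (by positivity), eq_div_iff (by positivity),
      ← pow_left_inj₀ (by positivity) hc.le two_ne_zero, mul_pow, sq_sqrt hK.le]

theorem helix_arclength_iff_general (a b μ r l : ℝ) (hl : 0 < l)
    (hla : 0 < 1 + a * r ^ 2) :
    let la := 1 + a * r ^ 2
    let γ : ℝ → ℝ × ℝ × ℝ := fun s => (r * Real.sin (l * s), -r * Real.cos (l * s), l * μ * s)
    (∀ s : ℝ, bcvLambda a (γ s) = la ∧ 0 < bcvLambda a (γ s)) ∧
    ((∀ s : ℝ, bcvMetric a b (γ s) (deriv γ s) (deriv γ s) = 1) ↔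
      l = la / Real.sqrt (r ^ 2 + (b * r ^ 2 / 2 - μ * la) ^ 2)) := by
  intro la γ
  have hcyl (s : ℝ) : bcvLambda a (γ s) = la := bcvLambda_sin_cos a r (l * s) (l * μ * s)
  refine ⟨fun s => ⟨hcyl s, hcyl s ▸ hla⟩, ?_⟩
  have hspeed (s : ℝ) : bcvMetric a b (γ s) (deriv γ s) (deriv γ s)
      = l ^ 2 * (r ^ 2 + (b * r ^ 2 / 2 - μ * la) ^ 2) / la ^ 2 := by
    rw [(hasDerivAt_helix r l (l * μ) s).deriv]
    exact bcvMetric_helix_velocity b l μ (l * s) (l * μ * s) hla.ne'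
  simp only [hspeed, forall_const]
  exact sq_mul_div_sq_eq_one_iff hl hla (by positivity)

/-- The helix `γ(s) = (r sin(λ s), −r cos(λ s), λ μ s)` lies in the region
where `1 + a(x² + y²) = λ_a = 1 + a r² > 0`, and it is parametrized by arc length with
respect to the BCV metric `h_{a,b}` if and only if
`λ = λ_a / √(r² + (b r²/2 − μ λ_a)²)`. -/
theorem helix_arclength_iff (a b μ r l : ℝ) (hr : 0 < r) (hl : 0 < l)
    (hla : 0 < 1 + a * r ^ 2) :
    let la := 1 + a * r ^ 2
    let γ : ℝ → ℝ × ℝ × ℝ := fun s => (r * Real.sin (l * s), -r * Real.cos (l * s), l * μ * s)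
    (∀ s : ℝ, bcvLambda a (γ s) = la ∧ 0 < bcvLambda a (γ s)) ∧
    ((∀ s : ℝ, bcvMetric a b (γ s) (deriv γ s) (deriv γ s) = 1) ↔
      l = la / Real.sqrt (r ^ 2 + (b * r ^ 2 / 2 - μ * la) ^ 2)) :=
  helix_arclength_iff_general a b μ r l hl hla
end

section
/- Let a, b, μ ∈ ℝ, r > 0, set λ_a = 1 + a r² (assumed positive), Q = √(r² + (b r²/2 − μ λ_a)²) and λ = λ_a/Q, and let γ(s) = (r sin(λ s), −r cos(λ s), λ μ s). Then for all s ∈ ℝ: h_{γ(s)}(γ'(s), E₁(γ(s))) = (r/Q) cos(λ s), h_{γ(s)}(γ'(s), E₂(γ(s))) = (r/Q) sin(λ s), and h_{γ(s)}(γ'(s), E₃(γ(s))) = (μ λ_a − b r²/2)/Q. In particular, the h-inner product of the unit tangent γ' with the vertical vector field E₃ is constant along γ, i.e. the helix makes a constant angle with E₃. -/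
/-- The first vector of the standard orthonormal frame of the BCV space. -/
noncomputable def bcvE1 (a b : ℝ) (p : ℝ × ℝ × ℝ) : ℝ × ℝ × ℝ :=
  (bcvLambda a p, 0, -b * p.2.1 / 2)

/-- The second vector of the standard orthonormal frame of the BCV space. -/
noncomputable def bcvE2 (a b : ℝ) (p : ℝ × ℝ × ℝ) : ℝ × ℝ × ℝ :=
  (0, bcvLambda a p, b * p.1 / 2)

/-- The third (vertical) vector of the standard orthonormal frame of the BCV space. -/
noncomputable def bcvE3 : ℝ × ℝ × ℝ :=
  (0, 0, 1)

/-!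
Pairing with the frame `E₁, E₂, E₃` reads off the coordinates `u₁/λ_a`, `u₂/λ_a` and
`u₃ + (b/2)(y u₁ − x u₂)/λ_a` of a vector `u` at `(x, y, z)`. Along the helix `λ_a` is the
constant `1 + a r²` because `x² + y² = r²`, and for `u = γ'` the twist term is `y u₁ − x u₂ = −λ r²`;
with `λ = λ_a/Q` the three components follow.
-/

open Real

section BCVFrame

variable {a : ℝ} {p : ℝ × ℝ × ℝ}

theorem bcvMetric_bcvE1 (b : ℝ) (hp : bcvLambda a p ≠ 0) (u : ℝ × ℝ × ℝ) :
    bcvMetric a b p u (bcvE1 a b p) = u.1 / bcvLambda a p := by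
  simp only [bcvMetric, bcvE1]
  field_simp
  ring

theorem bcvMetric_bcvE2 (b : ℝ) (hp : bcvLambda a p ≠ 0) (u : ℝ × ℝ × ℝ) :
    bcvMetric a b p u (bcvE2 a b p) = u.2.1 / bcvLambda a p := by
  simp only [bcvMetric, bcvE2]
  field_simp
  ring

theorem bcvMetric_bcvE3 (b : ℝ) (u : ℝ × ℝ × ℝ) :
    bcvMetric a b p u bcvE3 = u.2.2 + b / 2 * (p.2.1 * u.1 - p.1 * u.2.1) / bcvLambda a p := by
  simp [bcvMetric, bcvE3]

end BCVFrame

theorem bcvLambda_circle (a r θ z : ℝ) :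
    bcvLambda a (r * sin θ, -r * cos θ, z) = 1 + a * r ^ 2 := by
  simp only [bcvLambda]
  linear_combination a * r ^ 2 * sin_sq_add_cos_sq θ

theorem hasDerivAt_circularHelix (r l c s : ℝ) :
    HasDerivAt (fun s => (r * sin (l * s), -r * cos (l * s), c * s))
      (r * l * cos (l * s), r * l * sin (l * s), c) s := by
  have hθ : HasDerivAt (fun s => l * s) l s := by simpa using (hasDerivAt_id s).const_mul l
  refine ((((hasDerivAt_sin _).comp s hθ).const_mul r).prodMk
    ((((hasDerivAt_cos _).comp s hθ).const_mul (-r)).prodMk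
      ((hasDerivAt_id s).const_mul c))).congr_deriv ?_
  simp only [Prod.mk.injEq]
  exact ⟨by ring, by ring, mul_one c⟩

theorem helix_tangent_frame_components_general (a b μ r : ℝ)
    (hla : 0 < 1 + a * r ^ 2) :
    let la := 1 + a * r ^ 2
    let Q := Real.sqrt (r ^ 2 + (b * r ^ 2 / 2 - μ * la) ^ 2)
    let l := la / Q
    let γ : ℝ → ℝ × ℝ × ℝ := fun s => (r * Real.sin (l * s), -r * Real.cos (l * s), l * μ * s)
    ∀ s : ℝ,
      bcvMetric a b (γ s) (deriv γ s) (bcvE1 a b (γ s)) = (r / Q) * Real.cos (l * s) ∧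
      bcvMetric a b (γ s) (deriv γ s) (bcvE2 a b (γ s)) = (r / Q) * Real.sin (l * s) ∧
      bcvMetric a b (γ s) (deriv γ s) bcvE3 = (μ * la - b * r ^ 2 / 2) / Q := by
  intro la Q l γ s
  have hlam : bcvLambda a (γ s) = la := bcvLambda_circle a r (l * s) (l * μ * s)
  have hlam₀ : bcvLambda a (γ s) ≠ 0 := hlam ▸ hla.ne'
  have hγ' : deriv γ s = (r * l * cos (l * s), r * l * sin (l * s), l * μ) :=
    (hasDerivAt_circularHelix r l (l * μ) s).deriv
  rw [bcvMetric_bcvE1 b hlam₀, bcvMetric_bcvE2 b hlam₀, bcvMetric_bcvE3, hγ', hlam]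
  have hla' : la ≠ 0 := hla.ne'
  refine ⟨?_, ?_, ?_⟩
  · simp only [l]
    field_simp
  · simp only [l]
    field_simp
  · have hswept : -r * cos (l * s) * (r * l * cos (l * s)) - r * sin (l * s) * (r * l * sin (l * s))
        = -(r ^ 2 * l) := by
      linear_combination -(r ^ 2 * l) * sin_sq_add_cos_sq (l * s)
    simp only [γ]
    rw [hswept]
    field_simp
    ring

/-- For the arc-length parametrized helix
`γ(s) = (r sin(λ s), −r cos(λ s), λ μ s)` with `λ = λ_a/Q`, `Q = √(r² + (b r²/2 − μ λ_a)²)`,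
the components of the unit tangent `γ'` in the orthonormal frame `E₁, E₂, E₃` are
`(r/Q) cos(λ s)`, `(r/Q) sin(λ s)` and the constant `(μ λ_a − b r²/2)/Q`; in particular,
the helix makes a constant angle with the vertical vector field `E₃`. -/
theorem helix_tangent_frame_components (a b μ r : ℝ) (hr : 0 < r)
    (hla : 0 < 1 + a * r ^ 2) :
    let la := 1 + a * r ^ 2
    let Q := Real.sqrt (r ^ 2 + (b * r ^ 2 / 2 - μ * la) ^ 2)
    let l := la / Q
    let γ : ℝ → ℝ × ℝ × ℝ := fun s => (r * Real.sin (l * s), -r * Real.cos (l * s), l * μ * s)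
    ∀ s : ℝ,
      bcvMetric a b (γ s) (deriv γ s) (bcvE1 a b (γ s)) = (r / Q) * Real.cos (l * s) ∧
      bcvMetric a b (γ s) (deriv γ s) (bcvE2 a b (γ s)) = (r / Q) * Real.sin (l * s) ∧
      bcvMetric a b (γ s) (deriv γ s) bcvE3 = (μ * la - b * r ^ 2 / 2) / Q :=
  helix_tangent_frame_components_general a b μ r hla
end

section
/- Let a, b ∈ ℝ with 4a ≠ b², and let r > 0. For μ ∈ ℝ set λ_a = 1 + a r², Q = √(r² + (b r²/2 − μ λ_a)²), λ = λ_a/Q, s_ω = r/Q, c_ω = (b r²/2 − μ λ_a)/Q, ϖ = λ − 2 a r s_ω − b c_ω, κ = ϖ s_ω and τ = −ϖ c_ω − b/2. Then the condition κ² + τ² = b²/4 − (b² − 4a) s_ω² holds for every μ ∈ ℝ if and only if b = 0, a > 0, and a r² = 3 + 2√2 or a r² = 3 − 2√2. -/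
/-!
Multiplying by `Q² = r² + c²` turns the condition for the helix of slope `μ` into the vanishing of
`(1 - a r²)² - (1 - a r²) b c + (b² - 4a) r²` at `c = b r²/2 - μ (1 + a r²)`, an affine function
of `μ`. It vanishes for all `μ` iff its slope `(1 - a r²) b (1 + a r²)` and its value at `μ = 0`
vanish. Since `4a ≠ b²` and `1 + a r² = 0` would make the constant term `8`, this forces `b = 0`,
after which the constant term is `(a r²)² - 6 a r² + 1`.
-/

theorem helix_biharmonic_condition_iff {a b r c : ℝ} (hr : r ≠ 0) :
    (let la := 1 + a * r ^ 2
     let Q := Real.sqrt (r ^ 2 + c ^ 2)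
     let l := la / Q
     let sω := r / Q
     let cω := c / Q
     let ϖ := l - 2 * a * r * sω - b * cω
     let κ := ϖ * sω
     let τ := -ϖ * cω - b / 2
     κ ^ 2 + τ ^ 2 = b ^ 2 / 4 - (b ^ 2 - 4 * a) * sω ^ 2) ↔
    (1 - a * r ^ 2) ^ 2 - (1 - a * r ^ 2) * b * c + (b ^ 2 - 4 * a) * r ^ 2 = 0 := by
  have hS : 0 < r ^ 2 + c ^ 2 := by positivity
  have hQ0 : Real.sqrt (r ^ 2 + c ^ 2) ≠ 0 := (Real.sqrt_pos.mpr hS).ne'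
  have hQ : Real.sqrt (r ^ 2 + c ^ 2) ^ 2 = r ^ 2 + c ^ 2 := Real.sq_sqrt hS.le
  generalize Real.sqrt (r ^ 2 + c ^ 2) = Q at hQ0 hQ ⊢
  dsimp only
  rw [← sub_eq_zero, ← mul_eq_zero_iff_right (pow_ne_zero 2 hQ0)]
  congr! 1
  field_simp
  rw [hQ]
  ring

theorem forall_add_mul_eq_zero_iff {R : Type*} [Semiring R] {p q : R} :
    (∀ x : R, p + q * x = 0) ↔ p = 0 ∧ q = 0 := by
  refine ⟨fun h => ?_, fun ⟨hp, hq⟩ x => by simp [hp, hq]⟩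
  have hp : p = 0 := by simpa using h 0
  exact ⟨hp, by simpa [hp] using h 1⟩

theorem sq_sub_six_mul_add_one_eq_zero_iff {x : ℝ} :
    x ^ 2 - 6 * x + 1 = 0 ↔ x = 3 + 2 * Real.sqrt 2 ∨ x = 3 - 2 * Real.sqrt 2 := by
  have h2 : Real.sqrt 2 ^ 2 = 2 := Real.sq_sqrt zero_le_two
  have hfactor : x ^ 2 - 6 * x + 1 = (x - (3 + 2 * Real.sqrt 2)) * (x - (3 - 2 * Real.sqrt 2)) := by
    linear_combination 4 * h2
  rw [hfactor, mul_eq_zero, sub_eq_zero, sub_eq_zero]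

theorem hopf_cylinder_coefficients_eq_zero_iff {a b r : ℝ} (hab : 4 * a ≠ b ^ 2) (hr : r ≠ 0) :
    ((1 - a * r ^ 2) ^ 2 - (1 - a * r ^ 2) * b ^ 2 * r ^ 2 / 2 + (b ^ 2 - 4 * a) * r ^ 2 = 0 ∧
      (1 - a * r ^ 2) * b * (1 + a * r ^ 2) = 0) ↔
    (b = 0 ∧ 0 < a ∧ (a * r ^ 2 = 3 + 2 * Real.sqrt 2 ∨ a * r ^ 2 = 3 - 2 * Real.sqrt 2)) := by
  rw [← sq_sub_six_mul_add_one_eq_zero_iff]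
  constructor
  · rintro ⟨hconst, hslope⟩
    rcases mul_eq_zero.mp hslope with hAb | hla
    · rcases mul_eq_zero.mp hAb with hA | rfl
      · have hD : (b ^ 2 - 4 * a) * r ^ 2 = 0 := by
          linear_combination hconst - (1 - a * r ^ 2 - b ^ 2 * r ^ 2 / 2) * hA
        exact absurd (by linarith [(mul_eq_zero_iff_right (pow_ne_zero 2 hr)).mp hD]) hab
      · have hx : (a * r ^ 2) ^ 2 - 6 * (a * r ^ 2) + 1 = 0 := by linear_combination hconst
        have hx_pos : 0 < a * r ^ 2 := by linarith [sq_nonneg (a * r ^ 2)]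
        exact ⟨rfl, pos_of_mul_pos_left hx_pos (sq_nonneg r), hx⟩
    · have h8 : (8 : ℝ) = 0 := by
        linear_combination hconst - (a * r ^ 2 - 7 + b ^ 2 * r ^ 2 / 2) * hla
      norm_num at h8
  · rintro ⟨rfl, -, hx⟩
    exact ⟨by linear_combination hx, by ring⟩

/-- For `4a ≠ b²` and `r > 0`, the biharmonicity condition
`κ² + τ² = b²/4 − (b² − 4a) s_ω²` of the geodesic helices of the rotational Hopf cylinder of
radius `r` holds for every slope parameter `μ ∈ ℝ` if and only if `b = 0`, `a > 0`, and
`a r² = 3 + 2√2` or `a r² = 3 − 2√2`. -/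
theorem totally_biharmonic_hopf_cylinder_iff (a b r : ℝ) (hab : 4 * a ≠ b ^ 2) (hr : 0 < r) :
    (∀ μ : ℝ,
      let la := 1 + a * r ^ 2
      let Q := Real.sqrt (r ^ 2 + (b * r ^ 2 / 2 - μ * la) ^ 2)
      let l := la / Q
      let sω := r / Q
      let cω := (b * r ^ 2 / 2 - μ * la) / Q
      let ϖ := l - 2 * a * r * sω - b * cω
      let κ := ϖ * sω
      let τ := -ϖ * cω - b / 2
      κ ^ 2 + τ ^ 2 = b ^ 2 / 4 - (b ^ 2 - 4 * a) * sω ^ 2) ↔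
    (b = 0 ∧ 0 < a ∧
      (a * r ^ 2 = 3 + 2 * Real.sqrt 2 ∨ a * r ^ 2 = 3 - 2 * Real.sqrt 2)) := by
  rw [← hopf_cylinder_coefficients_eq_zero_iff hab hr.ne', ← forall_add_mul_eq_zero_iff]
  refine forall_congr' fun μ => (helix_biharmonic_condition_iff hr.ne').trans ?_
  constructor <;> intro h <;> linear_combination h
end
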